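/- arXiv:2103.11876 — 3 statements merged into one kernel-verified Lean document; each statement's English description precedes it below -/
import Mathlib

section
/- Let s, t be positive integers and let b, c be non-negative integers with b ≠ c. Then Σ_{n=1}^∞ 1/((n+b)^s (n+c)^t) = Σ_{j=2}^s ((-1)^{s+j}/(c-b)^{t+s-j}) C(s+t-j-1, t-1) (ζ(j) - H_b^{(j)}) + Σ_{j=2}^t ((-1)^s/(c-b)^{t+s-j}) C(s+t-j-1, s-1) (ζ(j) - H_c^{(j)}) + ((-1)^s/(c-b)^{t+s-1}) C(s+t-2, s-1) (H_b - H_c). -/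
open Finset

/-- Generalized harmonic number `H_n^(r) = ∑_{k=1}^n 1/k^r`. -/
noncomputable def Hgen (r n : ℕ) : ℝ := ∑ k ∈ Finset.Icc 1 n, (1 : ℝ) / (k : ℝ) ^ r

/-- Hyperharmonic numbers of non-negative order: `hpos 0 n = 1/n`,
`hpos (r+1) n = ∑_{k=1}^n hpos r k`.  In particular `hpos 1 n = H_n`. -/
noncomputable def hpos : ℕ → ℕ → ℝ
  | 0, n => 1 / (n : ℝ)
  | r + 1, n => ∑ k ∈ Finset.Icc 1 n, hpos r k

/-- Hyperharmonic numbers of negative order: `hneg r n = h_n^(-r)` for `r ≥ 1`. -/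
noncomputable def hneg (r n : ℕ) : ℝ :=
  if r < n then (-1 : ℝ) ^ r / (((n - r : ℕ) : ℝ) * (Nat.choose n r : ℝ))
  else ∑ k ∈ Finset.range n, (Nat.choose r k : ℝ) * (-1 : ℝ) ^ k / ((n - k : ℕ) : ℝ)

/-- Hyperharmonic numbers of arbitrary integer order. -/
noncomputable def hh (r : ℤ) (n : ℕ) : ℝ :=
  if 0 ≤ r then hpos r.toNat n else hneg (-r).toNat n

/-- Riemann zeta value `ζ(k) = ∑_{n=1}^∞ 1/n^k`. -/
noncomputable def zetaVal (k : ℕ) : ℝ := ∑' n : ℕ, 1 / ((n : ℝ) + 1) ^ k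

/-- Linear Euler sum `ζ_{H^(s)}(t) = ∑_{n=1}^∞ H_n^(s)/n^t`. -/
noncomputable def eulerSum (s t : ℕ) : ℝ := ∑' n : ℕ, Hgen s (n + 1) / ((n : ℝ) + 1) ^ t

/-- The set of Riemann zeta values `ζ(k)`, `k ≥ 2`. -/
def zetaSet : Set ℝ := {x | ∃ k : ℕ, 2 ≤ k ∧ x = zetaVal k}

/-- The set of Riemann zeta values together with linear Euler sums. -/
def zetaEulerSet : Set ℝ :=
  zetaSet ∪ {x | ∃ s t : ℕ, 1 ≤ s ∧ 2 ≤ t ∧ x = eulerSum s t}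

/-!
Put `x = 1/(n+1+b)`, `y = 1/(n+1+c)` and `z = 1/(c-b)`. Then `x y = z (x - y)`, and iterating
this relation (Pascal's rule supplies the binomial coefficients) splits `x^s y^t` into a polynomial
in `x` plus a polynomial in `y`, both without constant term: the partial fraction decomposition.
Summed over `n`, each power `x^j`, `y^j` with `j ≥ 2` gives a tail `ζ(j) - H^{(j)}` of a zeta
series, while the two linear terms combine into a multiple of `x - y`, whose sum telescopes to
`H_c - H_b`.
-/

open Filter Topology

/-- With `x = 1/u` and `z = 1/w`, the principal part at `u = 0` of `1 / (u^(p+1) (u+w)^(q+1))`. -/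
def principalPart {R : Type*} [CommRing R] (x z : R) (p q : ℕ) : R :=
  z ^ (q + 1) * ∑ k ∈ range (p + 1), ((q + k).choose q : R) * (-z) ^ k * x ^ (p + 1 - k)

section Algebra

variable {R : Type*} [CommRing R]

theorem principalPart_succ_succ (x z : R) (p q : ℕ) :
    z * (principalPart x z (p + 1) q - principalPart x z p (q + 1)) =
      principalPart x z (p + 1) (q + 1) := by
  have pascal : ∑ k ∈ range (p + 1),
        ((q + 1 + (k + 1)).choose (q + 1) : R) * (-z) ^ (k + 1) * x ^ (p + 1 + 1 - (k + 1)) =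
      ∑ k ∈ range (p + 1),
          ((q + (k + 1)).choose q : R) * (-z) ^ (k + 1) * x ^ (p + 1 + 1 - (k + 1)) -
        z * ∑ k ∈ range (p + 1),
          ((q + 1 + k).choose (q + 1) : R) * (-z) ^ k * x ^ (p + 1 - k) := by
    rw [mul_sum, ← sum_sub_distrib]
    refine sum_congr rfl fun k _ => ?_
    rw [show q + 1 + (k + 1) = q + k + 1 + 1 by omega, Nat.choose_succ_succ,
      show q + (k + 1) = q + k + 1 by omega, show q + 1 + k = q + k + 1 by omega,
      Nat.add_sub_add_right]
    push_cast
    ring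
  simp only [principalPart]
  rw [sum_range_succ' _ (p + 1), sum_range_succ' _ (p + 1), pascal]
  simp only [add_zero, Nat.choose_self, Nat.cast_one]
  ring

theorem mul_pow_succ_eq_principalPart {x y z : R} (h : x * y = z * (x - y)) (q : ℕ) :
    x * y ^ (q + 1) = principalPart x z 0 q + principalPart y (-z) q 0 := by
  have geom := geom_sum₂_mul z y (q + 1)
  have hx : x * (z - y) = z * y := by linear_combination -h
  have shift : ∑ i ∈ range (q + 1), z ^ i * y ^ (q + 1 - i) =
      (∑ i ∈ range (q + 1), z ^ i * y ^ (q + 1 - 1 - i)) * y := by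
    rw [sum_mul]
    refine sum_congr rfl fun i hi => ?_
    rw [mul_assoc, ← pow_succ, Nat.add_sub_cancel,
      Nat.sub_add_comm (Nat.lt_succ_iff.1 (mem_range.1 hi))]
  simp only [principalPart, zero_add, add_zero, sum_range_one, Nat.choose_self, Nat.cast_one,
    pow_zero, Nat.choose_zero_right, neg_neg, one_mul, mul_one, tsub_zero, pow_one, shift]
  linear_combination x * geom - (∑ i ∈ range (q + 1), z ^ i * y ^ (q + 1 - 1 - i)) * hx

theorem pow_succ_mul_pow_succ_eq_principalPart {x y z : R} (h : x * y = z * (x - y)) (p q : ℕ) :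
    x ^ (p + 1) * y ^ (q + 1) = principalPart x z p q + principalPart y (-z) q p := by
  induction p generalizing q with
  | zero => simpa using mul_pow_succ_eq_principalPart h q
  | succ p ihp =>
    induction q with
    | zero =>
      have h' : y * x = -z * (y - x) := by linear_combination h
      simpa [mul_comm, add_comm] using mul_pow_succ_eq_principalPart h' (p + 1)
    | succ q ihq =>
      have step : x ^ (p + 2) * y ^ (q + 2) =
          z * (x ^ (p + 2) * y ^ (q + 1) - x ^ (p + 1) * y ^ (q + 2)) := by
        linear_combination x ^ (p + 1) * y ^ (q + 1) * h
      rw [step, ihq, ihp (q + 1), ← principalPart_succ_succ x z p q,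
        ← principalPart_succ_succ y (-z) q p]
      ring

end Algebra

theorem Hgen_eq_sum_range (r n : ℕ) : Hgen r n = ∑ i ∈ range n, 1 / ((i : ℝ) + 1) ^ r := by
  induction n with
  | zero => simp [Hgen]
  | succ n ih =>
    rw [sum_range_succ, ← ih, Hgen, sum_Icc_succ_top (by omega), ← Hgen]
    push_cast
    rfl

theorem Hgen_succ (r n : ℕ) : Hgen r (n + 1) = Hgen r n + 1 / ((n : ℝ) + 1) ^ r := by
  rw [Hgen_eq_sum_range, Hgen_eq_sum_range, sum_range_succ]

theorem tendsto_Hgen_add_sub {r : ℕ} (hr : r ≠ 0) (m : ℕ) :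
    Tendsto (fun n => Hgen r (n + m) - Hgen r n) atTop (𝓝 0) := by
  simp only [Hgen_eq_sum_range, sum_range_add, add_sub_cancel_left]
  rw [← sum_const_zero (s := range m)]
  refine tendsto_finsetSum _ fun k _ => ?_
  have h := (tendsto_one_div_add_atTop_nhds_zero_nat (𝕜 := ℝ) |>.comp
    (tendsto_add_atTop_nat k)).pow r
  rw [zero_pow hr] at h
  refine h.congr fun n => ?_
  simp

theorem hasSum_inv_pow_add {m : ℕ} (hm : 2 ≤ m) (b : ℕ) :
    HasSum (fun n : ℕ => ((n + 1 + b : ℕ) : ℝ)⁻¹ ^ m) (zetaVal m - Hgen m b) := by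
  have hζ : HasSum (fun n : ℕ => 1 / ((n : ℝ) + 1) ^ m) (zetaVal m) := by
    have h := (summable_nat_add_iff 1).mpr (Real.summable_one_div_nat_pow.mpr hm)
    push_cast at h
    exact h.hasSum
  have h := (hasSum_nat_add_iff' b).mpr hζ
  rw [← Hgen_eq_sum_range] at h
  refine h.congr_fun fun n => ?_
  push_cast
  ring

theorem hasSum_sub_succ_of_tendsto {G : Type*} [AddCommGroup G] [TopologicalSpace G]
    [IsTopologicalAddGroup G] [T2Space G] {f : ℕ → G} {l : G} (hf : Tendsto f atTop (𝓝 l))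
    (hs : Summable fun n => f n - f (n + 1)) :
    HasSum (fun n => f n - f (n + 1)) (f 0 - l) := by
  obtain ⟨a, ha⟩ := hs
  have h := ha.tendsto_sum_nat
  simp only [sum_range_sub'] at h
  rwa [tendsto_nhds_unique (tendsto_const_nhds.sub hf) h]

theorem hasSum_inv_sub_inv (b c : ℕ) :
    HasSum (fun n : ℕ => ((n + 1 + b : ℕ) : ℝ)⁻¹ - ((n + 1 + c : ℕ) : ℝ)⁻¹)
      (Hgen 1 c - Hgen 1 b) := by
  set g : ℕ → ℝ := fun n => Hgen 1 (n + c) - Hgen 1 (n + b)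
  have hg : ∀ n,
      ((n + 1 + b : ℕ) : ℝ)⁻¹ - ((n + 1 + c : ℕ) : ℝ)⁻¹ = g n - g (n + 1) := by
    intro n
    simp only [g, add_right_comm n 1, Hgen_succ]
    push_cast
    ring
  have hlim : Tendsto g atTop (𝓝 0) := by
    simpa [g] using
      (tendsto_Hgen_add_sub one_ne_zero c).sub (tendsto_Hgen_add_sub one_ne_zero b)
  have hprod : Summable fun n : ℕ =>
      ((n + 1 + b : ℕ) : ℝ)⁻¹ * ((n + 1 + c : ℕ) : ℝ)⁻¹ := by
    refine Summable.of_nonneg_of_le (fun n => by positivity) (fun n => ?_)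
      ((hasSum_inv_pow_add le_rfl b).summable.add (hasSum_inv_pow_add le_rfl c).summable)
    have hnonneg : 0 ≤ ((n + 1 + b : ℕ) : ℝ)⁻¹ * ((n + 1 + c : ℕ) : ℝ)⁻¹ := by
      positivity
    nlinarith [two_mul_le_add_sq ((n + 1 + b : ℕ) : ℝ)⁻¹ ((n + 1 + c : ℕ) : ℝ)⁻¹]
  have hsum : Summable fun n => g n - g (n + 1) := by
    refine (hprod.mul_left ((c : ℝ) - b)).congr fun n => ?_
    rw [← hg]
    field_simp
    push_cast
    ring
  have h := (hasSum_sub_succ_of_tendsto hlim hsum).congr_fun hg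
  simpa [g] using h

/-- The `k = p` term of `principalPart` is linear in `x`; its series need not converge. -/
theorem hasSum_principalPart_sub {R : Type*} [CommRing R] [TopologicalSpace R]
    [IsTopologicalRing R] {x : ℕ → R} {S : ℕ → R}
    (hx : ∀ m, 2 ≤ m → HasSum (fun n => x n ^ m) (S m)) (z : R) (p q : ℕ) :
    HasSum
      (fun n => principalPart (x n) z p q - z ^ (q + 1) * ((q + p).choose q : R) * (-z) ^ p * x n)
      (z ^ (q + 1) * ∑ k ∈ range p, ((q + k).choose q : R) * (-z) ^ k * S (p + 1 - k)) := by
  simp only [principalPart, sum_range_succ, Nat.add_sub_cancel_left, pow_one]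
  refine ((hasSum_sum fun k hk => (hx _ ?_).mul_left _).mul_left _).congr_fun fun n => by ring
  simp only [mem_range] at hk
  omega

theorem hasSum_one_div_pow_mul_pow {b c : ℕ} {z : ℝ} (hz : z * ((c : ℝ) - b) = 1)
    (p q : ℕ) :
    HasSum
      (fun n => 1 / (((n + 1 + b : ℕ) : ℝ) ^ (p + 1) * ((n + 1 + c : ℕ) : ℝ) ^ (q + 1)))
      (z ^ (q + 1) * ∑ k ∈ range p, ((q + k).choose q : ℝ) * (-z) ^ k *
          (zetaVal (p + 1 - k) - Hgen (p + 1 - k) b) +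
        (-z) ^ (p + 1) * ∑ k ∈ range q, ((p + k).choose p : ℝ) * z ^ k *
          (zetaVal (q + 1 - k) - Hgen (q + 1 - k) c) +
        ((p + q).choose p : ℝ) * z ^ (q + 1) * (-z) ^ p * (Hgen 1 c - Hgen 1 b)) := by
  have hxy : ∀ n : ℕ, ((n + 1 + b : ℕ) : ℝ)⁻¹ * ((n + 1 + c : ℕ) : ℝ)⁻¹ =
      z * (((n + 1 + b : ℕ) : ℝ)⁻¹ - ((n + 1 + c : ℕ) : ℝ)⁻¹) := by
    intro n
    have hsub : ((n + 1 + b : ℕ) : ℝ)⁻¹ - ((n + 1 + c : ℕ) : ℝ)⁻¹ =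
        ((c : ℝ) - b) * (((n + 1 + b : ℕ) : ℝ)⁻¹ * ((n + 1 + c : ℕ) : ℝ)⁻¹) := by
      field_simp
      push_cast
      ring
    rw [hsub, ← mul_assoc, hz, one_mul]
  have hB := hasSum_principalPart_sub (fun m hm => hasSum_inv_pow_add hm b) z p q
  have hC := hasSum_principalPart_sub (fun m hm => hasSum_inv_pow_add hm c) (-z) q p
  rw [neg_neg] at hC
  refine ((hB.add hC).add ((hasSum_inv_sub_inv b c).mul_left
    (((p + q).choose p : ℝ) * z ^ (q + 1) * (-z) ^ p))).congr_fun fun n => ?_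
  rw [one_div, mul_inv, ← inv_pow, ← inv_pow, pow_succ_mul_pow_succ_eq_principalPart (hxy n),
    add_comm q p, Nat.choose_symm_add]
  ring

theorem sum_Icc_two_eq_sum_range {M : Type*} [AddCommMonoid M] (f : ℕ → M) (p : ℕ) :
    ∑ j ∈ Icc 2 (p + 1), f j = ∑ k ∈ range p, f (p + 1 - k) := by
  rw [← Ico_add_one_right_eq_Icc, ← Nat.Ico_zero_eq_range,
    sum_Ico_reflect f 0 (show p ≤ p + 1 + 1 by omega), show p + 1 + 1 - p = 2 by omega,
    Nat.sub_zero]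

theorem stmt4 (s t : ℕ) (hs : 1 ≤ s) (ht : 1 ≤ t) (b c : ℕ) (hbc : b ≠ c) :
    ∑' n : ℕ, 1 / (((n + 1 + b : ℕ) : ℝ) ^ s * ((n + 1 + c : ℕ) : ℝ) ^ t) =
      (∑ j ∈ Finset.Icc 2 s, (-1 : ℝ) ^ (s + j) / ((c : ℝ) - (b : ℝ)) ^ (t + s - j) *
        (Nat.choose (s + t - j - 1) (t - 1) : ℝ) * (zetaVal j - Hgen j b)) +
      (∑ j ∈ Finset.Icc 2 t, (-1 : ℝ) ^ s / ((c : ℝ) - (b : ℝ)) ^ (t + s - j) *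
        (Nat.choose (s + t - j - 1) (s - 1) : ℝ) * (zetaVal j - Hgen j c)) +
      (-1 : ℝ) ^ s / ((c : ℝ) - (b : ℝ)) ^ (t + s - 1) *
        (Nat.choose (s + t - 2) (s - 1) : ℝ) * (Hgen 1 b - Hgen 1 c) := by
  obtain ⟨p, rfl⟩ : ∃ p, s = p + 1 := ⟨s - 1, by omega⟩
  obtain ⟨q, rfl⟩ : ∃ q, t = q + 1 := ⟨t - 1, by omega⟩
  have hw : (c : ℝ) - b ≠ 0 := sub_ne_zero.2 (by exact_mod_cast hbc.symm)
  rw [(hasSum_one_div_pow_mul_pow (inv_mul_cancel₀ hw) p q).tsum_eq, sum_Icc_two_eq_sum_range,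
    sum_Icc_two_eq_sum_range, mul_sum, mul_sum]
  simp only [div_eq_mul_inv, ← inv_pow, neg_pow (_ : ℝ)⁻¹]
  congr 1
  congr 1
  · refine sum_congr rfl fun k hk => ?_
    have hk : k < p := mem_range.1 hk
    rw [show q + 1 + (p + 1) - (p + 1 - k) = q + 1 + k by omega,
      show p + 1 + (q + 1) - (p + 1 - k) - 1 = q + k by omega, Nat.add_sub_cancel,
      show p + 1 + (p + 1 - k) = k + 2 * (p + 1 - k) by omega, pow_add (-1 : ℝ), pow_mul,
      neg_one_sq, one_pow, mul_one]
    ring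
  · refine sum_congr rfl fun k hk => ?_
    have hk : k < q := mem_range.1 hk
    rw [show q + 1 + (p + 1) - (q + 1 - k) = p + 1 + k by omega,
      show p + 1 + (q + 1) - (q + 1 - k) - 1 = p + k by omega, Nat.add_sub_cancel]
    ring
  · rw [show q + 1 + (p + 1) - 1 = p + 1 + q by omega, show p + 1 + (q + 1) - 2 = p + q by omega,
      Nat.add_sub_cancel]
    ring
end

section
/- For every integer r, every non-negative integer m and every integer n ≥ 1, the hyperharmonic numbers satisfy h_n^{(r-m)} = Σ_{k=0}^n C(m,k) (-1)^k h_{n-k}^{(r)} (where h_0^{(r)} = 0 and C(m,k) = 0 for k > m). -/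
open Finset

/-!
Lowering the order by one is a backward difference: `h_n^(r-1) = h_n^(r) - h_(n-1)^(r)` for every
integer `r`. For `r ≥ 1` this is the defining recursion. For `r = -s ≤ 0`, `h^(r)` is the
`s`-fold backward difference of `n ↦ 1/n`: for `n ≤ s` this is the definition, and for `n > s` it
is the partial-fraction identity `∑_k C(s,k) (-1)^k / (n-k) = (-1)^s / ((n-s) C(n,s))`, proved by
induction on `s` with Pascal's rule.
Iterating the difference `m` times gives the binomial sum.
-/

/-- The `m`-th iterated backward difference `∇ᵐ f` at `n`, for `f` extended by zero to
negative arguments. -/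
def backwardDiffIter {R : Type*} [CommRing R] (f : ℕ → R) (m n : ℕ) : R :=
  ∑ k ∈ range (n + 1), (m.choose k : R) * (-1) ^ k * f (n - k)

section backwardDiffIter

variable {R : Type*} [CommRing R] (f : ℕ → R)

theorem backwardDiffIter_zero_left (n : ℕ) : backwardDiffIter f 0 n = f n := by
  simp [backwardDiffIter, sum_range_succ']

theorem backwardDiffIter_zero_right (m : ℕ) : backwardDiffIter f m 0 = f 0 := by
  simp [backwardDiffIter]

theorem backwardDiffIter_succ_succ (m n : ℕ) :
    backwardDiffIter f (m + 1) (n + 1) = backwardDiffIter f m (n + 1) - backwardDiffIter f m n := by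
  unfold backwardDiffIter
  rw [sum_range_succ', sum_range_succ' _ (n + 1), ← sub_add_eq_add_sub, ← sum_sub_distrib]
  congr 1
  · refine sum_congr rfl fun k _ => ?_
    rw [Nat.choose_succ_succ', Nat.add_sub_add_right]
    push_cast
    ring
  · simp

theorem eq_backwardDiffIter_of_sub {g : ℕ → ℕ → R} (h0 : ∀ m, g m 0 = 0)
    (hstep : ∀ m n, g (m + 1) (n + 1) = g m (n + 1) - g m n) (m n : ℕ) :
    g m n = backwardDiffIter (g 0) m n := by
  induction m generalizing n with
  | zero => rw [backwardDiffIter_zero_left]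
  | succ m ih =>
    cases n with
    | zero => rw [backwardDiffIter_zero_right, h0, h0]
    | succ n => rw [hstep, ih, ih, backwardDiffIter_succ_succ]

end backwardDiffIter

theorem backwardDiffIter_inv (r n : ℕ) :
    backwardDiffIter (fun j : ℕ => (j : ℝ)⁻¹) r n =
      ∑ k ∈ range n, (r.choose k : ℝ) * (-1 : ℝ) ^ k / ((n - k : ℕ) : ℝ) := by
  simp [backwardDiffIter, sum_range_succ, div_eq_mul_inv]

theorem backwardDiffIter_inv_of_lt {r n : ℕ} (h : r < n) :
    backwardDiffIter (fun j : ℕ => (j : ℝ)⁻¹) r n =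
      (-1 : ℝ) ^ r / (((n - r : ℕ) : ℝ) * (n.choose r : ℝ)) := by
  induction r generalizing n with
  | zero => simp [backwardDiffIter_zero_left]
  | succ r ih =>
    obtain ⟨n, rfl⟩ : ∃ n', n = n' + 1 := ⟨n - 1, by omega⟩
    have hrn : r < n := by omega
    rw [backwardDiffIter_succ_succ, ih (by omega), ih hrn, Nat.add_sub_add_right]
    have hden :
        ((n + 1 - r : ℕ) : ℝ) * ((n + 1).choose r : ℝ) = (n + 1) * (n.choose r : ℝ) := by
      rw [mul_comm, mul_comm _ (n.choose r : ℝ)]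
      exact_mod_cast (Nat.choose_mul_succ_eq n r).symm
    have hchoose : ((n + 1).choose (r + 1) : ℝ) = (n + 1) * (n.choose r : ℝ) / (r + 1) := by
      rw [eq_div_iff (by positivity)]
      exact_mod_cast (Nat.add_one_mul_choose_eq n r).symm
    have hchoose_ne : (n.choose r : ℝ) ≠ 0 := by exact_mod_cast (Nat.choose_pos hrn.le).ne'
    have hsub_ne : (n : ℝ) - r ≠ 0 := sub_ne_zero.mpr (by exact_mod_cast hrn.ne')
    rw [hden, hchoose, Nat.cast_sub hrn.le]
    field_simp
    ring

theorem hneg_eq_backwardDiffIter (r n : ℕ) :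
    hneg r n = backwardDiffIter (fun j : ℕ => (j : ℝ)⁻¹) r n := by
  unfold hneg
  split_ifs with h
  · exact (backwardDiffIter_inv_of_lt h).symm
  · exact (backwardDiffIter_inv r n).symm

theorem hpos_succ_succ (t n : ℕ) : hpos (t + 1) (n + 1) = hpos (t + 1) n + hpos t (n + 1) :=
  sum_Icc_succ_top (Nat.le_add_left 1 n) _

theorem hh_natCast (t n : ℕ) : hh t n = hpos t n := by simp [hh]

theorem hh_of_nonpos {r : ℤ} (hr : r ≤ 0) (n : ℕ) :
    hh r n = backwardDiffIter (fun j : ℕ => (j : ℝ)⁻¹) (-r).toNat n := by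
  unfold hh
  split_ifs with h
  · obtain rfl : r = 0 := le_antisymm hr h
    simp [hpos, backwardDiffIter_zero_left]
  · exact hneg_eq_backwardDiffIter _ _

theorem hh_zero_right (r : ℤ) : hh r 0 = 0 := by
  unfold hh
  split_ifs
  · cases r.toNat <;> simp [hpos]
  · simp [hneg]

theorem hh_sub_one_succ (r : ℤ) (n : ℕ) : hh (r - 1) (n + 1) = hh r (n + 1) - hh r n := by
  rcases le_or_gt 1 r with hr | hr
  · obtain ⟨t, rfl⟩ : ∃ t : ℕ, r = t + 1 := ⟨(r - 1).toNat, by omega⟩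
    rw [add_sub_cancel_right, ← Nat.cast_succ, hh_natCast, hh_natCast, hh_natCast,
      hpos_succ_succ, add_sub_cancel_left]
  · rw [hh_of_nonpos (by omega), hh_of_nonpos (by omega), hh_of_nonpos (by omega),
      show (-(r - 1)).toNat = (-r).toNat + 1 by omega, backwardDiffIter_succ_succ]

theorem stmt13_general (r : ℤ) (m : ℕ) (n : ℕ) :
    hh (r - (m : ℤ)) n = ∑ k ∈ Finset.range (n + 1),
      (Nat.choose m k : ℝ) * (-1 : ℝ) ^ k * hh r (n - k) := by
  have hstep (m n : ℕ) : hh (r - (m + 1 : ℕ)) (n + 1) = hh (r - m) (n + 1) - hh (r - m) n := by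
    rw [Nat.cast_succ, ← sub_sub, hh_sub_one_succ]
  rw [eq_backwardDiffIter_of_sub (g := fun m n => hh (r - m) n) (fun _ => hh_zero_right _)
    hstep m n]
  simp [backwardDiffIter]

theorem stmt13 (r : ℤ) (m : ℕ) (n : ℕ) (hn : 1 ≤ n) :
    hh (r - (m : ℤ)) n = ∑ k ∈ Finset.range (n + 1),
      (Nat.choose m k : ℝ) * (-1 : ℝ) ^ k * hh r (n - k) :=
  stmt13_general r m n
end

section
/- Let r, p be positive integers and l ≥ 1 an integer. Then Σ_{n=1}^r 1/(n^{p+1} C(n+l,l)) = H_r^{(p+1)} + Σ_{a=1}^l (-1)^a C(l,a) { Σ_{j=1}^p ((-1)^{p+j}/a^{p+1-j}) H_r^{(j)} + ((-1)^p/a^p)(H_{a+r} - H_a) }. -/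
/-!
Evaluating the partial fraction expansion
`∑_{a=0}^l (-1)^a C(l,a)/(x+a) = l!/(x(x+1)⋯(x+l))` at `x = n` gives `1/(n C(n+l,l))`, so after
dividing by `n^p` and splitting off `a = 0` the summand is
`1/n^{p+1} + ∑_{a=1}^l (-1)^a C(l,a)/(n^p(n+a))`. Expanding `1/(n^p(n+a))` in partial fractions
in `n` and summing over `n ≤ r` produces the harmonic numbers `H_r^{(j)}`, `j ≤ p`, and the
telescoped tail `∑_{n=1}^r 1/(n+a) = H_{a+r} - H_a`.
-/

open Finset

open Nat Polynomial

section
variable {K : Type*} [Field K]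

theorem sum_choose_mul_neg_one_pow_div_add_succ (l : ℕ) (x : K) :
    ∑ a ∈ range (l + 2), ((l + 1).choose a : K) * ((-1) ^ a / (x + a)) =
      ∑ a ∈ range (l + 1), (l.choose a : K) * ((-1) ^ a / (x + a)) -
        ∑ a ∈ range (l + 1), (l.choose a : K) * ((-1) ^ a / (x + 1 + a)) := by
  rw [sum_choose_succ_mul (fun a _ => (-1 : K) ^ a / (x + a)), sub_eq_add_neg, ← sum_neg_distrib]
  congr 1
  refine sum_congr rfl fun a _ => ?_
  push_cast
  ring

theorem sum_choose_mul_neg_one_pow_div_add (l : ℕ) (x : K)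
    (hx : (ascPochhammer K (l + 1)).eval x ≠ 0) :
    ∑ a ∈ range (l + 1), (l.choose a : K) * ((-1) ^ a / (x + a)) =
      l ! / (ascPochhammer K (l + 1)).eval x := by
  induction l generalizing x with
  | zero => simp
  | succ l ih =>
    set A := (ascPochhammer K (l + 1)).eval x
    set B := (ascPochhammer K (l + 1)).eval (x + 1)
    set C := (ascPochhammer K (l + 2)).eval x
    have hC_left : C = x * B := by
      simp [C, B, ascPochhammer_succ_left K (l + 1)]
    have hC_right : C = A * (x + (l + 1 : ℕ)) := ascPochhammer_succ_eval (l + 1) x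
    have hB : B ≠ 0 := right_ne_zero_of_mul (hC_left ▸ hx)
    have hA : A ≠ 0 := left_ne_zero_of_mul (hC_right ▸ hx)
    rw [sum_choose_mul_neg_one_pow_div_add_succ, ih x hA, ih (x + 1) hB,
      div_sub_div _ _ hA hB, div_eq_div_iff (mul_ne_zero hA hB) hx, factorial_succ]
    push_cast at hC_right ⊢
    linear_combination (l ! : K) * B * hC_right - (l ! : K) * A * hC_left

theorem sum_choose_mul_neg_one_pow_div_natCast_add [CharZero K] (l : ℕ) {n : ℕ} (hn : n ≠ 0) :
    ∑ a ∈ range (l + 1), (l.choose a : K) * ((-1) ^ a / (n + a)) =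
      1 / (n * (n + l).choose l) := by
  have hP : (ascPochhammer K (l + 1)).eval (n : K) = n * (l ! * (n + l).choose l) := by
    rw [ascPochhammer_succ_left, eval_mul, eval_X, eval_comp, eval_add, eval_X, eval_one,
      ← Nat.cast_succ, ← Nat.cast_ascFactorial, ascFactorial_eq_factorial_mul_choose]
    push_cast; rfl
  have hC : ((n + l).choose l : K) ≠ 0 := Nat.cast_ne_zero.2 (choose_pos (by omega)).ne'
  have hl : (l ! : K) ≠ 0 := Nat.cast_ne_zero.2 (factorial_ne_zero l)
  have hn' : (n : K) ≠ 0 := Nat.cast_ne_zero.2 hn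
  rw [sum_choose_mul_neg_one_pow_div_add l _ (by rw [hP]; positivity), hP]
  field_simp

theorem one_div_pow_succ_mul_choose_eq [CharZero K] (l p : ℕ) {n : ℕ} (hn : n ≠ 0) :
    1 / ((n : K) ^ (p + 1) * (n + l).choose l) =
      1 / (n : K) ^ (p + 1) +
        ∑ a ∈ Icc 1 l, (-1) ^ a * (l.choose a : K) * (1 / (n ^ p * (n + a))) := by
  have hsum := sum_choose_mul_neg_one_pow_div_natCast_add (K := K) l hn
  rw [range_eq_Ico, sum_eq_sum_Ico_succ_bot (by omega), Ico_add_one_right_eq_Icc] at hsum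
  calc 1 / ((n : K) ^ (p + 1) * (n + l).choose l)
      = 1 / (n : K) ^ p * (1 / (n * (n + l).choose l)) := by ring
    _ = _ := by
      rw [← hsum, mul_add, mul_sum]
      congr 1
      · simp [pow_succ, mul_comm]
      · exact sum_congr rfl fun a _ => by simp only [one_div, mul_inv]; ring

theorem one_div_pow_mul_add_eq_sum (p : ℕ) {a x : K} (ha : a ≠ 0) (hx : x ≠ 0)
    (hxa : x + a ≠ 0) :
    1 / (x ^ p * (x + a)) =
      ∑ j ∈ Icc 1 p, (-1) ^ (p + j) / a ^ (p + 1 - j) * (1 / x ^ j) +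
        (-1) ^ p / a ^ p * (1 / (x + a)) := by
  induction p with
  | zero => simp
  | succ p ih =>
    have hshift : ∀ j ∈ Icc 1 p, (-1 : K) ^ (p + 1 + j) / a ^ (p + 1 + 1 - j) * (1 / x ^ j) =
        -(1 / a) * ((-1) ^ (p + j) / a ^ (p + 1 - j) * (1 / x ^ j)) := by
      intro j hj
      rw [show p + 1 + 1 - j = p + 1 - j + 1 by grind, pow_succ, add_right_comm, pow_succ]
      field_simp
    rw [sum_Icc_succ_top (by omega), sum_congr rfl hshift, ← mul_sum,
      eq_sub_of_add_eq ih.symm, show p + 1 + 1 - (p + 1) = 1 by omega, ← two_mul, pow_mul,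
      neg_one_sq, one_pow]
    field_simp
    ring

end

theorem sum_Icc_one_div_add_eq_Hgen_sub (a r : ℕ) :
    ∑ n ∈ Icc 1 r, 1 / ((n : ℝ) + a) = Hgen 1 (a + r) - Hgen 1 a := by
  induction r with
  | zero => simp
  | succ r ih =>
    rw [sum_Icc_succ_top (by omega), ih, ← add_assoc, Hgen, Hgen, Hgen,
      sum_Icc_succ_top (by omega : 1 ≤ a + r + 1)]
    push_cast
    ring

theorem sum_Icc_one_div_pow_mul_add_eq (p r : ℕ) {a : ℕ} (ha : a ≠ 0) :
    ∑ n ∈ Icc 1 r, 1 / ((n : ℝ) ^ p * (n + a)) =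
      ∑ j ∈ Icc 1 p, (-1) ^ (p + j) / (a : ℝ) ^ (p + 1 - j) * Hgen j r +
        (-1) ^ p / (a : ℝ) ^ p * (Hgen 1 (a + r) - Hgen 1 a) := by
  have ha' : (a : ℝ) ≠ 0 := Nat.cast_ne_zero.2 ha
  rw [sum_congr rfl fun n hn => one_div_pow_mul_add_eq_sum p ha'
      (Nat.cast_ne_zero.2 (by grind)) (by positivity),
    sum_add_distrib, sum_comm, ← mul_sum, sum_Icc_one_div_add_eq_Hgen_sub]
  simp only [Hgen, ← mul_sum]

theorem stmt19_general (r p : ℕ) (l : ℕ) :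
    ∑ n ∈ Finset.Icc 1 r, 1 / ((n : ℝ) ^ (p + 1) * (Nat.choose (n + l) l : ℝ)) =
      Hgen (p + 1) r + ∑ a ∈ Finset.Icc 1 l, (-1 : ℝ) ^ a * (Nat.choose l a : ℝ) *
        ((∑ j ∈ Finset.Icc 1 p, (-1 : ℝ) ^ (p + j) / (a : ℝ) ^ (p + 1 - j) * Hgen j r) +
         (-1 : ℝ) ^ p / (a : ℝ) ^ p * (Hgen 1 (a + r) - Hgen 1 a)) := by
  rw [sum_congr rfl fun n hn => one_div_pow_succ_mul_choose_eq l p (by grind),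
    sum_add_distrib, sum_comm]
  congr 1
  refine sum_congr rfl fun a ha => ?_
  rw [← mul_sum, sum_Icc_one_div_pow_mul_add_eq p r (by grind)]

theorem stmt19 (r p : ℕ) (hr : 1 ≤ r) (hp : 1 ≤ p) (l : ℕ) (hl : 1 ≤ l) :
    ∑ n ∈ Finset.Icc 1 r, 1 / ((n : ℝ) ^ (p + 1) * (Nat.choose (n + l) l : ℝ)) =
      Hgen (p + 1) r + ∑ a ∈ Finset.Icc 1 l, (-1 : ℝ) ^ a * (Nat.choose l a : ℝ) *
        ((∑ j ∈ Finset.Icc 1 p, (-1 : ℝ) ^ (p + j) / (a : ℝ) ^ (p + 1 - j) * Hgen j r) +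
         (-1 : ℝ) ^ p / (a : ℝ) ^ p * (Hgen 1 (a + r) - Hgen 1 a)) :=
  stmt19_general r p l
end
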